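/- (p-th power weighted p-norm regularization is ground-cost adversarial.) Let n ∈ ℕ, μ, ν ∈ ℝⁿ histograms, c₀ ∈ ℝ^{n×n}, ε > 0, p ∈ (1,∞) with conjugate exponent q (1/p + 1/q = 1), and w ∈ ℝ^{n×n} with strictly positive entries. Then min_{π∈Π(μ,ν)} [ ⟨c₀,π⟩ + (ε/p) Σ_{ij} w_{ij} |π_{ij}|^p ] = sup_{c ∈ ℝ^{n×n}} [ OT_c(μ,ν) − (ε/q) Σ_{ij} w_{ij}^{−(q−1)} |(c_{ij} − (c₀)_{ij})/ε|^q ]. -/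

import Mathlib

open scoped BigOperators

/-- `μ` is a histogram: nonnegative entries summing to `1`. -/
def IsHistogram {n : ℕ} (μ : Fin n → ℝ) : Prop := (∀ i, 0 ≤ μ i) ∧ ∑ i, μ i = 1

/-- The transportation polytope `Π(μ,ν)`: matrices with nonnegative entries,
row sums `μ` and column sums `ν`. -/
def DCouplings {n : ℕ} (μ ν : Fin n → ℝ) : Set (Fin n → Fin n → ℝ) :=
  {π | (∀ i j, 0 ≤ π i j) ∧ (∀ i, ∑ j, π i j = μ i) ∧ (∀ j, ∑ i, π i j = ν j)}

/-- Frobenius inner product `⟨c, π⟩`. -/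
def frob {n : ℕ} (c π : Fin n → Fin n → ℝ) : ℝ := ∑ i, ∑ j, c i j * π i j

/-- Discrete optimal transport cost `OT_c(μ,ν)`. -/
noncomputable def dOT {n : ℕ} (c : Fin n → Fin n → ℝ) (μ ν : Fin n → ℝ) : ℝ :=
  ⨅ π : DCouplings μ ν, frob c π.1

/-- Convex conjugate of `G : ℝ^{n×n} → ℝ ∪ {+∞}`. -/
noncomputable def dconj {n : ℕ} (G : (Fin n → Fin n → ℝ) → EReal)
    (c : Fin n → Fin n → ℝ) : EReal :=
  ⨆ π : Fin n → Fin n → ℝ, ((frob c π : ℝ) : EReal) - G π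

/-!
Let `Ω(π) = (ε / p) ∑ w π ^ p` and `Ω*(c) = (ε / q) ∑ w ^ (-(q - 1)) |c / ε| ^ q`. The regularized
problem has a minimizer `π` on the compact polytope `Π(μ, ν)`, where `|π| = π`. Young's inequality
`x a ≤ w a ^ p / p + w ^ (-(q - 1)) |x| ^ q / q` gives weak duality: for every cost `c`,
`OT_c - Ω*(c - c₀) ≤ ⟨c, π⟩ - Ω*(c - c₀) ≤ ⟨c₀, π⟩ + Ω(π)`. Both inequalities are equalities for
`c = c₀ + ∇Ω(π)`: Young's inequality is then tight entrywise, and the first-order optimality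
condition of `π` on the convex polytope says exactly that `π` is an optimal plan for this `c`.
-/

open Set

theorem IsMinOn.nonneg_of_hasDerivAt_add_smul_sub {E : Type*} [AddCommGroup E] [Module ℝ E]
    {f : E → ℝ} {s : Set E} {x y : E} (hmin : IsMinOn f s x) (hs : Convex ℝ s) (hx : x ∈ s)
    (hy : y ∈ s) {m : ℝ} (hf : HasDerivAt (fun t : ℝ => f (x + t • (y - x))) m 0) :
    0 ≤ m := by
  have hline : IsMinOn (fun t : ℝ => f (x + t • (y - x))) (Icc 0 1) 0 :=
    hmin.comp_mapsTo (fun t ht => hs.add_smul_sub_mem hx hy ht) (by simp)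
  have hcone : (1 : ℝ) ∈ posTangentConeAt (Icc (0 : ℝ) 1) 0 :=
    mem_posTangentConeAt_of_segment_subset (by simp [segment_eq_Icc])
  simpa using hline.localize.hasFDerivWithinAt_nonneg hf.hasDerivWithinAt.hasFDerivWithinAt hcone

section Young

variable {p q : ℝ}

theorem mul_le_weighted_young (hpq : p.HolderConjugate q) {w a : ℝ} (hw : 0 < w) (ha : 0 ≤ a)
    (x : ℝ) : x * a ≤ w * a ^ p / p + w ^ (-(q - 1)) * |x| ^ q / q := by
  have hs : 0 < w ^ (1 / p) := Real.rpow_pos_of_pos hw _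
  have hx : (w ^ (1 / p) * a) ^ p = w * a ^ p := by
    rw [Real.mul_rpow hs.le ha, ← Real.rpow_mul hw.le, one_div_mul_cancel hpq.ne_zero,
      Real.rpow_one]
  have hy : ((w ^ (1 / p))⁻¹ * |x|) ^ q = w ^ (-(q - 1)) * |x| ^ q := by
    rw [Real.mul_rpow (inv_nonneg.2 hs.le) (abs_nonneg x), ← Real.rpow_neg hw.le,
      ← Real.rpow_mul hw.le, ← hpq.symm.div_conj_eq_sub_one]
    ring_nf
  calc x * a ≤ (w ^ (1 / p) * a) * ((w ^ (1 / p))⁻¹ * |x|) := by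
        rw [mul_mul_mul_comm, mul_inv_cancel₀ hs.ne', one_mul, mul_comm a]
        exact mul_le_mul_of_nonneg_right (le_abs_self x) ha
    _ ≤ _ := by
        simpa only [hx, hy] using Real.young_inequality_of_nonneg (mul_nonneg hs.le ha)
          (mul_nonneg (inv_nonneg.2 hs.le) (abs_nonneg x)) hpq

theorem mul_eq_weighted_young (hpq : p.HolderConjugate q) {w a : ℝ} (hw : 0 < w) (ha : 0 ≤ a) :
    w * a ^ (p - 1) * a = w * a ^ p / p + w ^ (-(q - 1)) * |w * a ^ (p - 1)| ^ q / q := by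
  have hpow : a ^ (p - 1) * a = a ^ p := by
    rw [← Real.rpow_add_one' ha (by linarith [hpq.lt]), sub_add_cancel]
  have hconj : (w * a ^ (p - 1)) ^ q = w ^ q * a ^ p := by
    rw [Real.mul_rpow hw.le (Real.rpow_nonneg ha _), ← Real.rpow_mul ha, hpq.sub_one_mul_conj]
  have hw' : w ^ (-(q - 1)) * w ^ q = w := by
    rw [← Real.rpow_add hw]; norm_num
  rw [abs_of_nonneg (by positivity), hconj, mul_assoc, hpow, ← mul_assoc, hw']
  calc w * a ^ p = w * a ^ p * (p⁻¹ + q⁻¹) := by rw [hpq.inv_add_inv_eq_one, mul_one]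
    _ = _ := by ring

end Young

section Couplings

variable {n : ℕ} {μ ν : Fin n → ℝ}

theorem dCouplings_nonempty (hμ : IsHistogram μ) (hν : IsHistogram ν) :
    (DCouplings μ ν).Nonempty :=
  ⟨fun i j => μ i * ν j, fun i j => mul_nonneg (hμ.1 i) (hν.1 j),
    fun i => by rw [← Finset.mul_sum, hν.2, mul_one],
    fun j => by rw [← Finset.sum_mul, hμ.2, one_mul]⟩

theorem dCouplings_subset_Icc : DCouplings μ ν ⊆ Icc 0 fun i _ => μ i :=
  fun _ ⟨hπ, hrow, _⟩ => ⟨fun i j => hπ i j, fun i j =>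
    (Finset.single_le_sum (fun j _ => hπ i j) (Finset.mem_univ j)).trans_eq (hrow i)⟩

theorem isClosed_dCouplings : IsClosed (DCouplings μ ν) := by
  simp only [DCouplings, ofPred_and, ofPred_forall]
  exact (isClosed_iInter fun i => isClosed_iInter fun j => isClosed_le (by fun_prop) (by fun_prop)
    ).inter ((isClosed_iInter fun i => isClosed_eq (by fun_prop) (by fun_prop)).inter
      (isClosed_iInter fun j => isClosed_eq (by fun_prop) (by fun_prop)))

theorem isCompact_dCouplings : IsCompact (DCouplings μ ν) :=
  isCompact_Icc.of_isClosed_subset isClosed_dCouplings dCouplings_subset_Icc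

theorem convex_dCouplings : Convex ℝ (DCouplings μ ν) := by
  rintro π ⟨hπ, hπr, hπc⟩ ρ ⟨hρ, hρr, hρc⟩ a b ha hb hab
  refine ⟨fun i j => ?_, fun i => ?_, fun j => ?_⟩
  · simp only [Pi.add_apply, Pi.smul_apply, smul_eq_mul]
    exact add_nonneg (mul_nonneg ha (hπ i j)) (mul_nonneg hb (hρ i j))
  · simp only [Pi.add_apply, Pi.smul_apply, smul_eq_mul, Finset.sum_add_distrib,
      ← Finset.mul_sum, hπr, hρr, ← add_mul, hab, one_mul]
  · simp only [Pi.add_apply, Pi.smul_apply, smul_eq_mul, Finset.sum_add_distrib,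
      ← Finset.mul_sum, hπc, hρc, ← add_mul, hab, one_mul]

theorem continuous_frob (c : Fin n → Fin n → ℝ) : Continuous (frob c) := by
  unfold frob; fun_prop

theorem frob_sub_right (c π ρ : Fin n → Fin n → ℝ) : frob c (ρ - π) = frob c ρ - frob c π := by
  simp only [frob, Pi.sub_apply, mul_sub, Finset.sum_sub_distrib]

theorem dOT_le_frob (c : Fin n → Fin n → ℝ) {π : Fin n → Fin n → ℝ}
    (hπ : π ∈ DCouplings μ ν) : dOT c μ ν ≤ frob c π := by
  refine ciInf_le ?_ (⟨π, hπ⟩ : DCouplings μ ν)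
  rw [← Set.image_eq_range]
  exact (isCompact_dCouplings.image (continuous_frob c)).bddBelow

theorem dOT_eq_frob_of_isMinOn {c π : Fin n → Fin n → ℝ} (hπ : π ∈ DCouplings μ ν)
    (hmin : IsMinOn (frob c) (DCouplings μ ν) π) : dOT c μ ν = frob c π :=
  hmin.iInf_eq hπ

end Couplings

section Regularized

variable {n : ℕ}

noncomputable def weightedPowSum (p : ℝ) (w π : Fin n → Fin n → ℝ) : ℝ :=
  ∑ i, ∑ j, w i j * π i j ^ p

theorem weightedPowSum_abs {p : ℝ} {w π : Fin n → Fin n → ℝ} (hπ : ∀ i j, 0 ≤ π i j) :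
    weightedPowSum p w (fun i j => |π i j|) = weightedPowSum p w π := by
  simp only [weightedPowSum, abs_of_nonneg (hπ _ _)]

theorem continuous_weightedPowSum {p : ℝ} (hp : 0 ≤ p) (w : Fin n → Fin n → ℝ) :
    Continuous (weightedPowSum p w) := by
  unfold weightedPowSum
  have := Real.continuous_rpow_const hp
  fun_prop

/-- `c₀ + ∇Ω(π)` for the regularizer `Ω = (ε / p) * weightedPowSum p w`, at `π ≥ 0`. -/
noncomputable def adversarialCost (c₀ : Fin n → Fin n → ℝ) (ε p : ℝ) (w π : Fin n → Fin n → ℝ) :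
    Fin n → Fin n → ℝ :=
  fun i j => c₀ i j + ε * (w i j * π i j ^ (p - 1))

theorem hasDerivAt_regularized_add_smul (c₀ : Fin n → Fin n → ℝ) (ε : ℝ) {p : ℝ} (hp : 1 ≤ p)
    (w π d : Fin n → Fin n → ℝ) :
    HasDerivAt (fun t : ℝ => frob c₀ (π + t • d) + ε / p * weightedPowSum p w (π + t • d))
      (frob (adversarialCost c₀ ε p w π) d) 0 := by
  have hentry (i j : Fin n) : HasDerivAt (fun t : ℝ => (π i j + t * d i j) ^ p)
      (p * π i j ^ (p - 1) * d i j) 0 := by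
    convert ((hasDerivAt_mul_const (d i j)).const_add (π i j)).rpow_const (x := 0) (Or.inr hp)
      using 1
    simp only [zero_mul, add_zero]
    ring
  have hsum : HasDerivAt
      (fun t : ℝ => ∑ i, ∑ j, (c₀ i j * (π i j + t * d i j)
        + ε / p * (w i j * (π i j + t * d i j) ^ p)))
      (∑ i, ∑ j, (c₀ i j * d i j + ε / p * (w i j * (p * π i j ^ (p - 1) * d i j)))) 0 :=
    HasDerivAt.fun_sum fun i _ => HasDerivAt.fun_sum fun j _ =>
      (((hasDerivAt_mul_const (d i j)).const_add (π i j)).const_mul (c₀ i j)).add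
        (((hentry i j).const_mul (w i j)).const_mul (ε / p))
  convert hsum using 1
  · ext t
    simp only [frob, weightedPowSum, Pi.add_apply, Pi.smul_apply, smul_eq_mul, Finset.mul_sum,
      ← Finset.sum_add_distrib]
  · simp only [frob, adversarialCost]
    refine Finset.sum_congr rfl fun i _ => Finset.sum_congr rfl fun j _ => ?_
    field_simp

end Regularized

section Duality

variable {n : ℕ} {c₀ π : Fin n → Fin n → ℝ} {ε p q : ℝ} {w : Fin n → Fin n → ℝ}

theorem isMinOn_frob_adversarialCost {μ ν : Fin n → ℝ} (hp : 1 ≤ p) (hπ : π ∈ DCouplings μ ν)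
    (hmin : IsMinOn (fun ρ => frob c₀ ρ + ε / p * weightedPowSum p w ρ) (DCouplings μ ν) π) :
    IsMinOn (frob (adversarialCost c₀ ε p w π)) (DCouplings μ ν) π := fun ρ hρ => by
  have := hmin.nonneg_of_hasDerivAt_add_smul_sub convex_dCouplings hπ hρ
    (hasDerivAt_regularized_add_smul c₀ ε hp w π (ρ - π))
  rw [frob_sub_right] at this
  exact sub_nonneg.1 this

theorem frob_le_add_weightedPowSum (hpq : p.HolderConjugate q) (hε : 0 < ε)
    (hw : ∀ i j, 0 < w i j) (hπ : ∀ i j, 0 ≤ π i j) (c : Fin n → Fin n → ℝ) :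
    frob c π ≤ frob c₀ π + ε / p * weightedPowSum p w π
      + ε / q * weightedPowSum q (fun i j => w i j ^ (-(q - 1)))
        (fun i j => |(c i j - c₀ i j) / ε|) := by
  simp only [frob, weightedPowSum, Finset.mul_sum, ← Finset.sum_add_distrib]
  gcongr with i _ j _
  calc c i j * π i j = c₀ i j * π i j + ε * ((c i j - c₀ i j) / ε * π i j) := by
        field_simp; ring
    _ ≤ c₀ i j * π i j + ε * (w i j * π i j ^ p / p
          + w i j ^ (-(q - 1)) * |(c i j - c₀ i j) / ε| ^ q / q) := by
        gcongr; exact mul_le_weighted_young hpq (hw i j) (hπ i j) _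
    _ = _ := by ring

theorem frob_adversarialCost_self (hpq : p.HolderConjugate q) (hε : 0 < ε)
    (hw : ∀ i j, 0 < w i j) (hπ : ∀ i j, 0 ≤ π i j) :
    frob (adversarialCost c₀ ε p w π) π = frob c₀ π + ε / p * weightedPowSum p w π
      + ε / q * weightedPowSum q (fun i j => w i j ^ (-(q - 1)))
        (fun i j => |(adversarialCost c₀ ε p w π i j - c₀ i j) / ε|) := by
  simp only [frob, weightedPowSum, adversarialCost, add_sub_cancel_left,
    mul_div_cancel_left₀ _ hε.ne', Finset.mul_sum, ← Finset.sum_add_distrib]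
  refine Finset.sum_congr rfl fun i _ => Finset.sum_congr rfl fun j _ => ?_
  have := mul_eq_weighted_young hpq (hw i j) (hπ i j)
  linear_combination ε * this

end Duality

/-- (Weighted `p`-th power `p`-norm regularization is ground cost
adversarial.) -/
theorem stmt9 {n : ℕ} (μ ν : Fin n → ℝ) (hμ : IsHistogram μ) (hν : IsHistogram ν)
    (c₀ : Fin n → Fin n → ℝ) (ε : ℝ) (hε : 0 < ε)
    (p q : ℝ) (hp : 1 < p) (hpq : 1 / p + 1 / q = 1)
    (w : Fin n → Fin n → ℝ) (hw : ∀ i j, 0 < w i j) :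
    (⨅ π : DCouplings μ ν,
        (frob c₀ π.1 + ε / p * ∑ i, ∑ j, w i j * |π.1 i j| ^ p))
      = ⨆ c : Fin n → Fin n → ℝ,
          (dOT c μ ν -
            ε / q * ∑ i, ∑ j, w i j ^ (-(q - 1)) * |(c i j - c₀ i j) / ε| ^ q) := by
  have hconj : p.HolderConjugate q :=
    Real.holderConjugate_iff.2 ⟨hp, by simpa only [one_div] using hpq⟩
  let Φ ρ := frob c₀ ρ + ε / p * weightedPowSum p w ρ
  let R (c : Fin n → Fin n → ℝ) := ε / q * weightedPowSum q (fun i j => w i j ^ (-(q - 1)))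
    (fun i j => |(c i j - c₀ i j) / ε|)
  have hΦ : Continuous Φ :=
    (continuous_frob c₀).add (continuous_const.mul (continuous_weightedPowSum hconj.nonneg w))
  obtain ⟨π, hπ, hmin⟩ :=
    isCompact_dCouplings.exists_isMinOn (dCouplings_nonempty hμ hν) hΦ.continuousOn
  have hprimal : (⨅ ρ : DCouplings μ ν,
      frob c₀ ρ.1 + ε / p * weightedPowSum p w fun i j => |ρ.1 i j|) = Φ π := by
    rw [← hmin.iInf_eq hπ]
    exact iInf_congr fun ρ => by rw [weightedPowSum_abs ρ.2.1]
  have hweak (c : Fin n → Fin n → ℝ) : dOT c μ ν - R c ≤ Φ π := by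
    linarith [dOT_le_frob c hπ, frob_le_add_weightedPowSum (c₀ := c₀) hconj hε hw hπ.1 c]
  have hstrong : dOT (adversarialCost c₀ ε p w π) μ ν - R (adversarialCost c₀ ε p w π) = Φ π := by
    rw [dOT_eq_frob_of_isMinOn hπ (isMinOn_frob_adversarialCost hp.le hπ hmin),
      frob_adversarialCost_self hconj hε hw hπ.1]
    ring
  exact hprimal.trans (ciSup_eq_of_forall_le_of_forall_lt_exists_gt hweak fun x hx =>
    ⟨adversarialCost c₀ ε p w π, hstrong ▸ hx⟩).symm
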